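/- Suppose x, y satisfy exp((ln y)^ν) < ln x < y^β for fixed 0 < ν < 1 and 0 < β < 1/2, and set u = ln x/ln y. Then ln^{(3)} u + o(1) < ln^{(3)} y < ln^{(3)} u + ln(1/ν) + o(1) as y → ∞; consequently ln^{(k)} y = ln^{(k)} u + o(1) for every k ≥ 4. -/
import Mathlib

noncomputable def iterLog : ℕ → ℝ → ℝ
  | 0, x => x
  | k + 1, x => Real.log (iterLog k x)

lemma iterLog_add (m n : ℕ) (x : ℝ) : iterLog (m + n) x = iterLog m (iterLog n x) := by
  induction m with
  | zero => simp [iterLog]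
  | succ m ih => rw [Nat.succ_add]; show Real.log _ = Real.log _; rw [ih]

lemma iterLog_large (n : ℕ) (M : ℝ) : ∃ t : ℝ, ∀ a : ℝ, t ≤ a → M ≤ iterLog n a := by
  induction n generalizing M with
  | zero => exact ⟨M, fun a h => h⟩
  | succ n ih =>
    obtain ⟨t, ht⟩ := ih (Real.exp M)
    refine ⟨t, fun a ha => ?_⟩
    have h := ht a ha
    calc M = Real.log (Real.exp M) := (Real.log_exp M).symm
      _ ≤ Real.log (iterLog n a) := Real.log_le_log (Real.exp_pos M) h

lemma iterLog_gap (n : ℕ) : ∃ t : ℝ, ∀ a b : ℝ, t ≤ a → a ≤ b → b - a ≤ 1 →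
    iterLog n a ≤ iterLog n b ∧ iterLog n b - iterLog n a ≤ b - a := by
  induction n with
  | zero => exact ⟨0, fun a b _ hab _ => ⟨hab, le_refl _⟩⟩
  | succ n ih =>
    obtain ⟨t, ht⟩ := ih
    obtain ⟨t', ht'⟩ := iterLog_large n 1
    refine ⟨max t t', fun a b ha hab hgap => ?_⟩
    obtain ⟨h1, h2⟩ := ht a b (le_trans (le_max_left _ _) ha) hab hgap
    have h3 : 1 ≤ iterLog n a := ht' a (le_trans (le_max_right _ _) ha)
    have hA : 0 < iterLog n a := lt_of_lt_of_le one_pos h3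
    have hB : 0 < iterLog n b := lt_of_lt_of_le hA h1
    show Real.log _ ≤ Real.log _ ∧ Real.log _ - Real.log _ ≤ _
    refine ⟨Real.log_le_log hA h1, ?_⟩
    have h4 : Real.log (iterLog n b) - Real.log (iterLog n a) = Real.log (iterLog n b / iterLog n a) := by
      rw [Real.log_div hB.ne' hA.ne']
    have h5 : Real.log (iterLog n b / iterLog n a) ≤ iterLog n b / iterLog n a - 1 :=
      Real.log_le_sub_one_of_pos (div_pos hB hA)
    have h6 : iterLog n b / iterLog n a - 1 = (iterLog n b - iterLog n a) / iterLog n a := by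
      field_simp
    have h7 : (iterLog n b - iterLog n a) / iterLog n a ≤ iterLog n b - iterLog n a :=
      div_le_self (by linarith) h3
    linarith [h4, h5]

set_option maxHeartbeats 1000000 in
/-- If `exp((ln y)^ν) < ln x < y^β` with `0 < ν < 1`, `0 < β < 1/2`, and `u = ln x/ln y`,
then `ln^{(3)} u + o(1) < ln^{(3)} y < ln^{(3)} u + ln(1/ν) + o(1)` as `y → ∞`;
consequently `ln^{(k)} y = ln^{(k)} u + o(1)` for every `k ≥ 4`. -/
theorem stmt_18 (ν β : ℝ) (hν0 : 0 < ν) (hν1 : ν < 1) (hβ0 : 0 < β) (hβ : β < 1 / 2) :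
    ∀ ε > 0, ∀ k : ℕ, 4 ≤ k → ∃ y₀ : ℝ, ∀ x y : ℝ, y₀ < y →
      Real.exp ((Real.log y) ^ ν) < Real.log x → Real.log x < y ^ β →
      (iterLog 3 (Real.log x / Real.log y) - ε < iterLog 3 y ∧
        iterLog 3 y < iterLog 3 (Real.log x / Real.log y) + Real.log (1 / ν) + ε) ∧
      |iterLog k y - iterLog k (Real.log x / Real.log y)| ≤ ε := by
  intro ε hε k hk
  have hνne : ν ≠ 0 := ne_of_gt hν0
  obtain ⟨tB, htB⟩ := iterLog_gap (k - 4)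
  set δ : ℝ := min ε 1 with hδdef
  have hδ0 : 0 < δ := lt_min hε one_pos
  have hδ1 : δ ≤ 1 := min_le_right _ _
  have hδε : δ ≤ ε := min_le_left _ _
  set C₀ : ℝ := Real.log (1 / ν) + ε / 2 with hC0def
  have hlogν : Real.log (1 / ν) = -Real.log ν := by rw [one_div, Real.log_inv]
  have hC0 : 0 < C₀ := by
    have h : 0 < Real.log (1 / ν) := Real.log_pos (by rw [lt_div_iff₀ hν0]; linarith only [hν1])
    have h2 : 0 < ε / 2 := by linarith only [hε]
    rw [hC0def]; linarith only [h, h2]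
  set R : ℝ := max (C₀ / δ) (max 1 (Real.exp tB)) with hRdef
  have hR1 : 1 ≤ R := le_trans (le_max_left _ _) (le_max_right _ _)
  set c : ℝ := Real.log 2 / ν with hcdef
  have hεexp : 0 < 1 - Real.exp (-(ε / 2)) := by
    have h : Real.exp (-(ε / 2)) < 1 := Real.exp_lt_one_iff.mpr (by linarith only [hε])
    linarith only [h]
  set M₀ : ℝ := max ((Real.log 2 + max 1 (Real.exp R)) / ν)
      (max (c / (1 - Real.exp (-(ε / 2)))) 1) with hM0def
  set L₀ : ℝ := max (Real.exp M₀) (max 1 ((8 / ν) ^ ((2:ℝ) / ν))) with hL0def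
  refine ⟨Real.exp L₀, fun x y hy hx1 hx2 => ?_⟩
  have hy0 : 0 < y := lt_trans (Real.exp_pos _) hy
  set L : ℝ := Real.log y with hLdef
  have hLL0 : L₀ < L := by
    have := Real.log_lt_log (Real.exp_pos _) hy
    rwa [Real.log_exp] at this
  have hL1 : 1 ≤ L := le_of_lt (lt_of_le_of_lt (le_trans (le_max_left _ _) (le_max_right _ _)) hLL0)
  have hLpos : 0 < L := lt_of_lt_of_le one_pos hL1
  set M : ℝ := Real.log L with hMdef
  have hMM0 : M₀ ≤ M := by
    have h1 : Real.exp M₀ ≤ L := le_of_lt (lt_of_le_of_lt (le_max_left _ _) hLL0)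
    have := Real.log_le_log (Real.exp_pos _) h1
    rwa [Real.log_exp] at this
  have hMpos : 0 ≤ M := Real.log_nonneg hL1
  have hM1 : (Real.log 2 + max 1 (Real.exp R)) / ν ≤ M :=
    le_trans (le_max_left _ _) hMM0
  have hM2 : c / (1 - Real.exp (-(ε / 2))) ≤ M :=
    le_trans (le_trans (le_max_left _ _) (le_max_right _ _)) hMM0
  have hM3 : 1 ≤ M := le_trans (le_trans (le_max_right _ _) (le_max_right _ _)) hMM0
  -- W bounds
  set W : ℝ := L ^ ((ν:ℝ) / 2) with hWdef
  have hW : 8 / ν ≤ W := by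
    calc 8 / ν = ((8 / ν) ^ ((2:ℝ) / ν)) ^ (ν / 2) := by
          rw [← Real.rpow_mul (by positivity : (0:ℝ) ≤ 8 / ν)]
          rw [show (2:ℝ) / ν * (ν / 2) = 1 by field_simp, Real.rpow_one]
      _ ≤ W := Real.rpow_le_rpow (by positivity)
          (le_of_lt (lt_of_le_of_lt (le_trans (le_max_right _ _) (le_max_right _ _)) hLL0))
          (by positivity)
  have hW8 : 8 ≤ W := le_trans (by rw [le_div_iff₀ hν0]; linarith only [hν1]) hW
  have hWpos : 0 < W := by positivity
  have hlogL : M ≤ 2 / ν * W := by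
    have h := Real.log_le_rpow_div (le_of_lt hLpos) (half_pos hν0)
    have h2 : L ^ (ν / 2) / (ν / 2) = 2 / ν * W := by rw [hWdef]; field_simp
    rw [hMdef]; rw [h2] at h; exact h
  have hLν : L ^ ν = W * W := by
    rw [hWdef, ← Real.rpow_add hLpos]; ring_nf
  -- x side
  have hlogx : 0 < Real.log x := lt_trans (Real.exp_pos _) hx1
  have h1 : L ^ ν < Real.log (Real.log x) := by
    have := Real.log_lt_log (Real.exp_pos _) hx1
    rwa [Real.log_exp] at this
  have h2 : Real.log (Real.log x) < β * L := by
    have := Real.log_lt_log hlogx hx2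
    rwa [Real.log_rpow hy0] at this
  set u : ℝ := Real.log x / L with hudef
  have hu : 0 < u := div_pos hlogx hLpos
  set A : ℝ := Real.log u with hAdef
  have hAeq : A = Real.log (Real.log x) - M := by
    rw [hAdef, hudef, Real.log_div hlogx.ne' hLpos.ne', hMdef]
  have hAlow : L ^ ν - M < A := by rw [hAeq]; linarith only [h1]
  have hAup : A < β * L := by rw [hAeq]; linarith only [h2, hMpos]
  have hMν : M * ν ≤ 2 * W := by
    have h3 : 2 / ν * W * ν = 2 * W := by field_simp
    have h4 := mul_le_mul_of_nonneg_right hlogL hν0.le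
    linarith only [h3, h4]
  have h8 : 8 ≤ W * ν := by
    have h3 := (div_le_iff₀ hν0).mp hW
    linarith only [h3]
  have hAW : W * W / 2 ≤ A := by
    have p1 : M * ν * W ≤ 2 * W * W := mul_le_mul_of_nonneg_right hMν hWpos.le
    have p2 : M * 8 ≤ M * (W * ν) := mul_le_mul_of_nonneg_left h8 hMpos
    linarith only [hAlow, hLν, p1, p2, mul_self_nonneg W]
  have hA1 : 1 ≤ A := by
    have h64 : (8:ℝ) * 8 ≤ W * W :=
      mul_le_mul hW8 hW8 (by norm_num) (le_trans (by norm_num) hW8)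
    linarith only [hAW, h64]
  have hApos : 0 < A := lt_of_lt_of_le one_pos hA1
  -- B
  set B : ℝ := Real.log A with hBdef
  have hBlow : ν * M - Real.log 2 ≤ B := by
    have h3 : Real.log (L ^ ν / 2) ≤ B := by
      apply Real.log_le_log (by positivity)
      rw [hLν]; linarith only [hAW]
    rwa [Real.log_div (by positivity) two_ne_zero, Real.log_rpow hLpos] at h3
  have hlogβ : Real.log β < 0 := Real.log_neg hβ0 (by linarith only [hβ])
  have hBM : B < M := by
    have h3 : B ≤ Real.log (β * L) := Real.log_le_log hApos (le_of_lt hAup)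
    rw [Real.log_mul hβ0.ne' hLpos.ne'] at h3
    rw [hMdef]; linarith only [h3, hlogβ]
  have hM1' : Real.log 2 + max 1 (Real.exp R) ≤ M * ν := by
    rw [div_le_iff₀ hν0] at hM1; linarith only [hM1]
  have hB1 : 1 ≤ B := by
    linarith only [hBlow, hM1', le_max_left 1 (Real.exp R)]
  have hBR : Real.exp R ≤ B := by
    linarith only [hBlow, hM1', le_max_right 1 (Real.exp R)]
  have hBpos : 0 < B := lt_of_lt_of_le one_pos hB1
  have hMpos' : 0 < M := lt_of_lt_of_le one_pos hM3
  -- S, T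
  set S : ℝ := Real.log B with hSdef
  set T : ℝ := Real.log M with hTdef
  have hST : S < T := Real.log_lt_log hBpos hBM
  have hSR : R ≤ S := by
    have := Real.log_le_log (Real.exp_pos R) hBR
    rwa [Real.log_exp] at this
  have hS1 : 1 ≤ S := le_trans hR1 hSR
  have hSpos : 0 < S := lt_of_lt_of_le one_pos hS1
  have hTpos : 0 < T := lt_trans hSpos hST
  -- upper bound: T ≤ S + log(1/ν) + ε/2
  have hMc : ν * (M - c) = ν * M - Real.log 2 := by rw [hcdef]; field_simp
  have h9 : 0 < ν * (M - c) := by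
    rw [hMc]; linarith only [hM1', le_max_left 1 (Real.exp R)]
  have hMcpos : 0 < M - c := by
    rcases mul_pos_iff.mp h9 with ⟨_, h⟩ | ⟨h', _⟩
    · exact h
    · linarith only [h', hν0]
  have hkey : M * Real.exp (-(ε / 2)) ≤ M - c := by
    have h3 := (div_le_iff₀ hεexp).mp hM2
    have h4 : M * (1 - Real.exp (-(ε / 2))) = M - M * Real.exp (-(ε / 2)) := by ring
    linarith only [h3, h4]
  have hTS : T ≤ S + Real.log (1 / ν) + ε / 2 := by
    have h3 : Real.log (M * Real.exp (-(ε / 2))) ≤ Real.log (M - c) :=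
      Real.log_le_log (by positivity) hkey
    rw [Real.log_mul hMpos'.ne' (Real.exp_ne_zero _), Real.log_exp] at h3
    have h4 : Real.log (ν * (M - c)) ≤ S := by
      apply Real.log_le_log (by positivity)
      rw [hMc]; linarith only [hBlow]
    rw [Real.log_mul hνne hMcpos.ne'] at h4
    rw [← hTdef] at h3
    rw [hlogν]
    linarith only [h3, h4]
  -- part 1 conversions
  have e3u : iterLog 3 u = S := by
    show Real.log (Real.log (Real.log u)) = S
    rw [← hAdef, ← hBdef, hSdef]
  have e3y : iterLog 3 y = T := by
    show Real.log (Real.log (Real.log y)) = T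
    rw [← hLdef, ← hMdef, hTdef]
  constructor
  · constructor
    · rw [e3u, e3y]; linarith only [hST, hε]
    · rw [e3u, e3y]; linarith only [hTS, hε]
  -- part 2
  have hk4 : k - 4 + 4 = k := by omega
  set P : ℝ := Real.log S with hPdef
  set Q : ℝ := Real.log T with hQdef
  have e4u : iterLog k u = iterLog (k - 4) P := by
    rw [← hk4, iterLog_add]
    congr 1
  have e4y : iterLog k y = iterLog (k - 4) Q := by
    rw [← hk4, iterLog_add]
    congr 1
  have hPQ : P ≤ Q := Real.log_le_log hSpos (le_of_lt hST)
  have hPtB : tB ≤ P := by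
    have h3 : Real.exp tB ≤ S :=
      le_trans (le_trans (le_max_right _ _) (le_max_right _ _)) hSR
    have := Real.log_le_log (Real.exp_pos tB) h3
    rwa [Real.log_exp] at this
  have hQP : Q - P ≤ δ := by
    have h3 : Q - P = Real.log (T / S) := by
      rw [hQdef, hPdef, Real.log_div hTpos.ne' hSpos.ne']
    have h4 : Real.log (T / S) ≤ T / S - 1 := Real.log_le_sub_one_of_pos (div_pos hTpos hSpos)
    have h5 : T / S - 1 = (T - S) / S := by field_simp
    have hTSC : T - S ≤ C₀ := by rw [hC0def]; linarith only [hTS]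
    have h6 : (T - S) / S ≤ C₀ / S := (div_le_div_iff_of_pos_right hSpos).mpr hTSC
    have h7 : C₀ / S ≤ δ := by
      rw [div_le_iff₀ hSpos]
      have h8 : C₀ / δ ≤ S := le_trans (le_max_left _ _) hSR
      rw [div_le_iff₀ hδ0] at h8
      linarith only [h8]
    linarith only [h3, h4, h5, h6, h7]
  obtain ⟨hmono, hgap⟩ := htB P Q hPtB hPQ (le_trans hQP hδ1)
  rw [e4u, e4y, abs_le]
  constructor
  · linarith only [hmono, hε]
  · linarith only [hgap, hQP, hδε]
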